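/- (Theorem 4) Under the DMD-RSC scheme with learning rates η_t = 1/(γ Σ_{τ=1}^t |F_τ|) and approximation error ρ_t = η_t³/(2σ), for every x* ∈ X the regret satisfies Reg_T := Σ_{t=1}^T f_t(x_t) − Σ_{t=1}^T f_t(x*) ≤ (3dG⋆² + 8ξRG⋆)(1 + ln T)/(2σγ) + 6dG⋆/(σγ²) + 2dξG⋆²/(σ²γ²), where d := max_{1≤t≤T} d_t. -/

import Mathlib

/-!
Each round with nonempty feedback set `F_t` is an approximate mirror-descent step on the
linearised loss `g_t = ∑_{k ∈ F_t} ∇f_k(x_t)` with step `η_t = 1 / (γ S_t)`, where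
`S_t = ∑_{τ ≤ t} |F_τ|`.
First-order optimality at the exact minimiser and the three-point identity of the Bregman
divergence bound `g_t(x_t - u)` by `η_t ‖g_t‖² / (2σ) + (B(u, x_t) - B(u, x_{t+1})) / η_t`, up to
`2RξG⋆η_t/σ` for the inexactness: `ρ_t = η_t³/(2σ)` keeps `x_{t+1}` within `η_t²/σ` of the
minimiser and `∇ψ` is `ξG⋆`-Lipschitz. Relative strong convexity removes `γ |F_t| B(u, x_t)`,
which makes the Bregman terms telescope with weights `γ S_t`. A loss observed `d_k - 1` rounds
late costs `G⋆ ‖x_k - x_t‖`, and every movement `‖x_{s+1} - x_s‖ ≤ |F_s| (G⋆/(σγS_s) + 1/(σγ²S_s²))`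
is charged by at most `d` losses. Since `S_T = T`, the sums `∑ |F_t|/S_t ≤ 1 + log T` and
`∑ |F_t|/S_t² ≤ 2` finish the bound.
-/

open Finset

section Bregman

variable {E : Type*} [NormedAddCommGroup E] [NormedSpace ℝ E] {ψ : E → ℝ}

noncomputable def bregman (ψ : E → ℝ) (a b : E) : ℝ := ψ a - ψ b - fderiv ℝ ψ b (a - b)

@[simp]
lemma bregman_self (ψ : E → ℝ) (a : E) : bregman ψ a a = 0 := by
  simp [bregman]

lemma bregman_sub_bregman (ψ : E → ℝ) (a b c : E) :
    bregman ψ a c - bregman ψ b c = bregman ψ a b + (fderiv ℝ ψ b - fderiv ℝ ψ c) (a - b) := by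
  simp only [bregman, map_sub, sub_apply]
  ring

lemma bregman_nonneg {X : Set E} {σ : ℝ} (hσ : 0 ≤ σ)
    (hsc : ∀ a ∈ X, ∀ b ∈ X, σ / 2 * ‖a - b‖ ^ 2 ≤ bregman ψ a b)
    {a b : E} (ha : a ∈ X) (hb : b ∈ X) : 0 ≤ bregman ψ a b :=
  (by positivity : 0 ≤ σ / 2 * ‖a - b‖ ^ 2).trans (hsc a ha b hb)

lemma hasFDerivAt_bregman_left {y : E} (hψ : DifferentiableAt ℝ ψ y) (x : E) :
    HasFDerivAt (fun z => bregman ψ z x) (fderiv ℝ ψ y - fderiv ℝ ψ x) y := by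
  have hlin : HasFDerivAt (fun z => fderiv ℝ ψ x (z - x)) (fderiv ℝ ψ x) y := by
    simpa only [map_sub] using (fderiv ℝ ψ x).hasFDerivAt.sub_const (fderiv ℝ ψ x x)
  exact (hψ.hasFDerivAt.sub_const (ψ x)).sub hlin

noncomputable def proxObjective (ψ : E → ℝ) (g : E →L[ℝ] ℝ) (η : ℝ) (x z : E) : ℝ :=
  g z + bregman ψ z x / η

variable {X : Set E} {σ η : ℝ} {g : E →L[ℝ] ℝ} {x y : E}

/-- First-order optimality at `y`, rewritten with the three-point identity. -/
lemma bregman_div_le_proxObjective_sub (hX : Convex ℝ X) (hψ : Differentiable ℝ ψ)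
    (hy : y ∈ X) (hmin : IsMinOn (proxObjective ψ g η x) X y) {z : E} (hz : z ∈ X) :
    bregman ψ z y / η ≤ proxObjective ψ g η x z - proxObjective ψ g η x y := by
  have hder : HasFDerivAt (proxObjective ψ g η x)
      (g + η⁻¹ • (fderiv ℝ ψ y - fderiv ℝ ψ x)) y := by
    have hfun : proxObjective ψ g η x = ⇑g + fun z => η⁻¹ * bregman ψ z x := by
      funext z
      simp only [proxObjective, div_eq_inv_mul, Pi.add_apply]
    rw [hfun]
    exact g.hasFDerivAt.add ((hasFDerivAt_bregman_left (hψ y) x).const_mul η⁻¹)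
  have hfoc := hmin.localize.hasFDerivWithinAt_nonneg hder.hasFDerivWithinAt
    (sub_mem_posTangentConeAt_of_segment_subset (hX.segment_subset hy hz))
  have hthree := bregman_sub_bregman ψ z y x
  simp only [add_apply, smul_apply, smul_eq_mul, map_sub] at hfoc hthree
  simp only [proxObjective, div_eq_inv_mul]
  linear_combination hfoc - η⁻¹ * hthree

lemma norm_sub_le_of_isMinOn_proxObjective (hX : Convex ℝ X) (hψ : Differentiable ℝ ψ)
    (hsc : ∀ a ∈ X, ∀ b ∈ X, σ / 2 * ‖a - b‖ ^ 2 ≤ bregman ψ a b) (hσ : 0 < σ) (hη : 0 < η)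
    (hx : x ∈ X) (hy : y ∈ X) (hmin : IsMinOn (proxObjective ψ g η x) X y) :
    ‖x - y‖ ≤ η * ‖g‖ / σ := by
  have hgrowth := bregman_div_le_proxObjective_sub hX hψ hy hmin hx
  have hxy := hsc x hx y hy
  have hyx := hsc y hy x hx
  rw [norm_sub_rev] at hyx
  have hg := (Real.le_norm_self _).trans (g.le_opNorm (x - y))
  simp only [proxObjective, bregman_self, zero_div, add_zero, map_sub] at hgrowth hg
  have hquad : σ * ‖x - y‖ ^ 2 ≤ η * ‖g‖ * ‖x - y‖ := by
    have : bregman ψ x y + bregman ψ y x ≤ η * (g x - g y) := by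
      rw [div_le_iff₀ hη] at hgrowth
      field_simp at hgrowth
      linarith
    nlinarith
  rw [le_div_iff₀ hσ]
  rcases (norm_nonneg (x - y)).eq_or_lt with h0 | hpos
  · rw [← h0, zero_mul]; positivity
  · nlinarith

lemma apply_sub_le_of_isMinOn_proxObjective (hX : Convex ℝ X) (hψ : Differentiable ℝ ψ)
    (hsc : ∀ a ∈ X, ∀ b ∈ X, σ / 2 * ‖a - b‖ ^ 2 ≤ bregman ψ a b) (hσ : 0 < σ) (hη : 0 < η)
    (hx : x ∈ X) (hy : y ∈ X) (hmin : IsMinOn (proxObjective ψ g η x) X y) {u : E} (hu : u ∈ X) :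
    g (x - u) ≤ η * ‖g‖ ^ 2 / (2 * σ) + (bregman ψ u x - bregman ψ u y) / η := by
  have hgrowth := bregman_div_le_proxObjective_sub hX hψ hy hmin hu
  have hyx := hsc y hy x hx
  rw [norm_sub_rev] at hyx
  have hg := (Real.le_norm_self _).trans (g.le_opNorm (x - y))
  simp only [proxObjective, map_sub] at hgrowth hg ⊢
  have hyoung : ‖g‖ * ‖x - y‖ - σ / 2 * ‖x - y‖ ^ 2 / η ≤ η * ‖g‖ ^ 2 / (2 * σ) := by
    have hsq : η * ‖g‖ ^ 2 / (2 * σ) - (‖g‖ * ‖x - y‖ - σ / 2 * ‖x - y‖ ^ 2 / η)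
        = (η * ‖g‖ - σ * ‖x - y‖) ^ 2 / (2 * σ * η) := by
      field_simp
      ring
    have : 0 ≤ (η * ‖g‖ - σ * ‖x - y‖) ^ 2 / (2 * σ * η) := by positivity
    linarith
  have hyx' := div_le_div_of_nonneg_right hyx hη.le
  rw [sub_div]
  linarith

lemma norm_sub_le_of_proxObjective_le (hX : Convex ℝ X) (hψ : Differentiable ℝ ψ)
    (hsc : ∀ a ∈ X, ∀ b ∈ X, σ / 2 * ‖a - b‖ ^ 2 ≤ bregman ψ a b) (hσ : 0 < σ) (hη : 0 < η)
    (hy : y ∈ X) (hmin : IsMinOn (proxObjective ψ g η x) X y) {x' : E} (hx' : x' ∈ X)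
    (happrox : proxObjective ψ g η x x' ≤ proxObjective ψ g η x y + η ^ 3 / (2 * σ)) :
    ‖x' - y‖ ≤ η ^ 2 / σ := by
  have hgrowth := bregman_div_le_proxObjective_sub hX hψ hy hmin hx'
  have hsq : ‖x' - y‖ ^ 2 ≤ (η ^ 2 / σ) ^ 2 := by
    have h := (div_le_div_of_nonneg_right (hsc x' hx' y hy) hη.le).trans hgrowth
    rw [div_le_iff₀ hη] at h
    replace h := h.trans (mul_le_mul_of_nonneg_right (sub_le_iff_le_add'.mpr happrox) hη.le)
    field_simp at h
    rw [div_pow, le_div_iff₀ (by positivity)]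
    linear_combination h
  exact (pow_le_pow_iff_left₀ (norm_nonneg _) (by positivity) two_ne_zero).mp hsq

lemma norm_sub_le_of_proxObjective_le_of_isMinOn (hX : Convex ℝ X) (hψ : Differentiable ℝ ψ)
    (hsc : ∀ a ∈ X, ∀ b ∈ X, σ / 2 * ‖a - b‖ ^ 2 ≤ bregman ψ a b) (hσ : 0 < σ) (hη : 0 < η)
    (hx : x ∈ X) (hy : y ∈ X) (hmin : IsMinOn (proxObjective ψ g η x) X y) {x' : E}
    (hx' : x' ∈ X)
    (happrox : proxObjective ψ g η x x' ≤ proxObjective ψ g η x y + η ^ 3 / (2 * σ)) :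
    ‖x' - x‖ ≤ η * ‖g‖ / σ + η ^ 2 / σ :=
  calc ‖x' - x‖ ≤ ‖x' - y‖ + ‖x - y‖ :=
        (norm_sub_le_norm_sub_add_norm_sub x' y x).trans_eq (by rw [norm_sub_rev y x])
    _ ≤ η ^ 2 / σ + η * ‖g‖ / σ :=
        add_le_add (norm_sub_le_of_proxObjective_le hX hψ hsc hσ hη hy hmin hx' happrox)
          (norm_sub_le_of_isMinOn_proxObjective hX hψ hsc hσ hη hx hy hmin)
    _ = η * ‖g‖ / σ + η ^ 2 / σ := add_comm _ _

lemma bregman_le_bregman_add {L R : ℝ} (hσ : 0 ≤ σ)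
    (hsc : ∀ a ∈ X, ∀ b ∈ X, σ / 2 * ‖a - b‖ ^ 2 ≤ bregman ψ a b)
    (hL : ∀ a ∈ X, ∀ b ∈ X, ‖fderiv ℝ ψ a - fderiv ℝ ψ b‖ ≤ L * ‖a - b‖)
    (hR : ∀ z ∈ X, ‖z‖ ≤ R) {u x y : E} (hu : u ∈ X) (hx : x ∈ X) (hy : y ∈ X) :
    bregman ψ u x ≤ bregman ψ u y + 2 * R * L * ‖x - y‖ := by
  have hthree := bregman_sub_bregman ψ u x y
  have hxy := bregman_nonneg hσ hsc hx hy
  have hux : ‖u - x‖ ≤ 2 * R := (norm_sub_le u x).trans (by linarith [hR u hu, hR x hx])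
  have hlin : -(2 * R * L * ‖x - y‖) ≤ (fderiv ℝ ψ x - fderiv ℝ ψ y) (u - x) := by
    rw [neg_le]
    have hLxy := hL x hx y hy
    calc -(fderiv ℝ ψ x - fderiv ℝ ψ y) (u - x)
        ≤ ‖fderiv ℝ ψ x - fderiv ℝ ψ y‖ * ‖u - x‖ :=
          ((neg_le_abs _).trans_eq (Real.norm_eq_abs _).symm).trans
            (ContinuousLinearMap.le_opNorm _ _)
      _ ≤ L * ‖x - y‖ * (2 * R) :=
          mul_le_mul hLxy hux (norm_nonneg _) ((norm_nonneg _).trans hLxy)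
      _ = 2 * R * L * ‖x - y‖ := by ring
  linarith

lemma apply_sub_le_of_proxObjective_le (hX : Convex ℝ X) (hψ : Differentiable ℝ ψ)
    (hsc : ∀ a ∈ X, ∀ b ∈ X, σ / 2 * ‖a - b‖ ^ 2 ≤ bregman ψ a b)
    {L R : ℝ} (hL : ∀ a ∈ X, ∀ b ∈ X, ‖fderiv ℝ ψ a - fderiv ℝ ψ b‖ ≤ L * ‖a - b‖)
    (hL0 : 0 ≤ L) (hR : ∀ z ∈ X, ‖z‖ ≤ R) (hσ : 0 < σ) (hη : 0 < η)
    (hx : x ∈ X) (hy : y ∈ X) (hmin : IsMinOn (proxObjective ψ g η x) X y) {x' : E} (hx' : x' ∈ X)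
    (happrox : proxObjective ψ g η x x' ≤ proxObjective ψ g η x y + η ^ 3 / (2 * σ))
    {u : E} (hu : u ∈ X) :
    g (x - u) ≤ η * ‖g‖ ^ 2 / (2 * σ) + (bregman ψ u x - bregman ψ u x') / η
      + 2 * R * L * η / σ := by
  have hR0 : 0 ≤ R := (norm_nonneg x).trans (hR x hx)
  have hmoved : bregman ψ u x' ≤ bregman ψ u y + 2 * R * L * (η ^ 2 / σ) :=
    (bregman_le_bregman_add hσ.le hsc hL hR hu hx' hy).trans <| add_le_add_right
      (mul_le_mul_of_nonneg_left
        (norm_sub_le_of_proxObjective_le hX hψ hsc hσ hη hy hmin hx' happrox) (by positivity)) _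
  have hdiv : (bregman ψ u x - bregman ψ u y) / η
      ≤ (bregman ψ u x - bregman ψ u x') / η + 2 * R * L * η / σ := by
    rw [show 2 * R * L * η / σ = 2 * R * L * (η ^ 2 / σ) / η by field_simp, ← add_div]
    exact div_le_div_of_nonneg_right (by linarith) hη.le
  linarith [apply_sub_le_of_isMinOn_proxObjective hX hψ hsc hσ hη hx hy hmin hu]

end Bregman

def feedbackSet (T : ℕ) (d : ℕ → ℕ) (t : ℕ) : Finset ℕ :=
  (Icc 1 T).filter (fun k => k + d k - 1 = t)

section Delays

variable {E : Type*} [NormedAddCommGroup E] {T : ℕ} {d : ℕ → ℕ}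

lemma sum_sum_feedbackSet {M : Type*} [AddCommMonoid M]
    (hd : ∀ k ∈ Icc 1 T, 1 ≤ d k ∧ k + d k - 1 ≤ T) (h : ℕ → M) :
    ∑ t ∈ Icc 1 T, ∑ k ∈ feedbackSet T d t, h k = ∑ k ∈ Icc 1 T, h k :=
  sum_fiberwise_of_maps_to (fun k hk => by grind) h

lemma sum_card_feedbackSet (hd : ∀ k ∈ Icc 1 T, 1 ≤ d k ∧ k + d k - 1 ≤ T) :
    ∑ t ∈ Icc 1 T, #(feedbackSet T d t) = T := by
  simpa using sum_sum_feedbackSet hd (fun _ => (1 : ℕ))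

lemma card_feedbackSet_le (hd : ∀ k ∈ Icc 1 T, 1 ≤ d k ∧ k + d k - 1 ≤ T) (t : ℕ) :
    #(feedbackSet T d t) ≤ (Icc 1 T).sup d := by
  set D := (Icc 1 T).sup d
  calc #(feedbackSet T d t) ≤ #(Icc (t + 1 - D) t) := by
        refine card_le_card fun k hk => ?_
        simp only [feedbackSet, mem_filter] at hk
        have := le_sup (f := d) hk.1
        grind
    _ ≤ D := by simp only [Nat.card_Icc]; omega

lemma sum_sum_Ico_le_mul_sum (hd : ∀ k ∈ Icc 1 T, k + d k - 1 ≤ T) {a : ℕ → ℝ}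
    (ha : ∀ s, 0 ≤ a s) :
    ∑ k ∈ Icc 1 T, ∑ s ∈ Ico k (k + d k - 1), a s
      ≤ (Icc 1 T).sup d * ∑ s ∈ Icc 1 T, a s := by
  set D := (Icc 1 T).sup d
  rw [sum_comm' (t' := Icc 1 T) (s' := fun s => (Icc 1 T).filter (fun k => s ∈ Ico k (k + d k - 1)))
    (fun k s => by constructor <;> intro h <;> grind), mul_sum]
  refine sum_le_sum fun s _ => ?_
  rw [sum_const, nsmul_eq_mul]
  refine mul_le_mul_of_nonneg_right ?_ (ha s)
  have hcard : #((Icc 1 T).filter (fun k => s ∈ Ico k (k + d k - 1))) ≤ #(Icc (s + 1 - D) s) := by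
    refine card_le_card fun k hk => ?_
    simp only [mem_filter, mem_Ico] at hk
    have := le_sup (f := d) hk.1
    grind
  exact_mod_cast hcard.trans (by simp only [Nat.card_Icc]; omega)

lemma sum_sum_feedbackSet_norm_sub_le (hd : ∀ k ∈ Icc 1 T, 1 ≤ d k ∧ k + d k - 1 ≤ T)
    (x : ℕ → E) :
    ∑ t ∈ Icc 1 T, ∑ k ∈ feedbackSet T d t, ‖x k - x t‖
      ≤ (Icc 1 T).sup d * ∑ s ∈ Icc 1 T, ‖x (s + 1) - x s‖ :=
  calc ∑ t ∈ Icc 1 T, ∑ k ∈ feedbackSet T d t, ‖x k - x t‖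
      = ∑ t ∈ Icc 1 T, ∑ k ∈ feedbackSet T d t, ‖x k - x (k + d k - 1)‖ :=
        sum_congr rfl fun _ _ => sum_congr rfl fun _ hk => by rw [(mem_filter.1 hk).2]
    _ = ∑ k ∈ Icc 1 T, ‖x k - x (k + d k - 1)‖ := sum_sum_feedbackSet hd _
    _ ≤ ∑ k ∈ Icc 1 T, ∑ s ∈ Ico k (k + d k - 1), ‖x (s + 1) - x s‖ := by
        refine sum_le_sum fun k hk => ?_
        simpa only [dist_eq_norm, norm_sub_rev (x _) (x (_ + 1))] using
          dist_le_Ico_sum_dist x (by grind : k ≤ k + d k - 1)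
    _ ≤ (Icc 1 T).sup d * ∑ s ∈ Icc 1 T, ‖x (s + 1) - x s‖ :=
        sum_sum_Ico_le_mul_sum (fun k hk => (hd k hk).2) fun _ => norm_nonneg _

lemma sum_sub_le_sum_sum_feedbackSet_add (hd : ∀ k ∈ Icc 1 T, 1 ≤ d k ∧ k + d k - 1 ≤ T)
    {f : ℕ → E → ℝ} {x : ℕ → E} {u : E} {G : ℝ} (hG : 0 ≤ G)
    (hlip : ∀ t ∈ Icc 1 T, ∀ k ∈ feedbackSet T d t, f k (x k) - f k (x t) ≤ G * ‖x k - x t‖) :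
    ∑ t ∈ Icc 1 T, f t (x t) - ∑ t ∈ Icc 1 T, f t u
      ≤ ∑ t ∈ Icc 1 T, ∑ k ∈ feedbackSet T d t, (f k (x t) - f k u)
        + G * (Icc 1 T).sup d * ∑ s ∈ Icc 1 T, ‖x (s + 1) - x s‖ := by
  rw [← sum_sub_distrib, ← sum_sum_feedbackSet hd, mul_assoc]
  calc ∑ t ∈ Icc 1 T, ∑ k ∈ feedbackSet T d t, (f k (x k) - f k u)
      ≤ ∑ t ∈ Icc 1 T, ∑ k ∈ feedbackSet T d t, ((f k (x t) - f k u) + G * ‖x k - x t‖) := by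
        gcongr with t ht k hk
        linarith [hlip t ht k hk]
    _ = ∑ t ∈ Icc 1 T, ∑ k ∈ feedbackSet T d t, (f k (x t) - f k u)
          + G * ∑ t ∈ Icc 1 T, ∑ k ∈ feedbackSet T d t, ‖x k - x t‖ := by
        simp only [sum_add_distrib, mul_sum]
    _ ≤ _ := by gcongr; exact sum_sum_feedbackSet_norm_sub_le hd x

end Delays

section PartialSums

variable {a : ℕ → ℝ}

lemma one_le_sum_Icc (ha : ∀ t, 0 ≤ a t) (ha1 : 1 ≤ a 1) {t : ℕ} (ht : 1 ≤ t) :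
    1 ≤ ∑ τ ∈ Icc 1 t, a τ :=
  ha1.trans (single_le_sum (fun τ _ => ha τ) (mem_Icc.2 ⟨le_rfl, ht⟩))

/-- Each term is bounded by the increment `log S_t - log S_{t-1}` of the logarithm of the partial
sums, since `1 - x⁻¹ ≤ log x`. -/
lemma sum_div_sum_Icc_le_one_add_log (ha : ∀ t, 0 ≤ a t) (ha1 : 1 ≤ a 1) {T : ℕ} (hT : 1 ≤ T) :
    ∑ t ∈ Icc 1 T, a t / ∑ τ ∈ Icc 1 t, a τ ≤ 1 + Real.log (∑ τ ∈ Icc 1 T, a τ) := by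
  induction T, hT using Nat.le_induction with
  | base =>
    simp only [Icc_self, sum_singleton, div_self (by linarith : a 1 ≠ 0)]
    linarith [Real.log_nonneg ha1]
  | succ T hT ih =>
    rw [sum_Icc_succ_top (by omega), sum_Icc_succ_top (by omega)]
    have hS := one_le_sum_Icc ha ha1 hT
    set S := ∑ τ ∈ Icc 1 T, a τ
    have hS' : 0 < S + a (T + 1) := by linarith [ha (T + 1)]
    have hlog := Real.one_sub_inv_le_log_of_pos (div_pos hS' (by linarith : 0 < S))
    rw [Real.log_div hS'.ne' (by linarith), inv_div, one_sub_div hS'.ne', add_sub_cancel_left]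
      at hlog
    linarith

/-- Each term is bounded by the decrement `1 / S_{t-1} - 1 / S_t` of the reciprocal partial
sums. -/
lemma sum_div_sum_Icc_sq_le_two (ha : ∀ t, 0 ≤ a t) (ha1 : 1 ≤ a 1) {T : ℕ} (hT : 1 ≤ T) :
    ∑ t ∈ Icc 1 T, a t / (∑ τ ∈ Icc 1 t, a τ) ^ 2 ≤ 2 := by
  suffices h : ∑ t ∈ Icc 1 T, a t / (∑ τ ∈ Icc 1 t, a τ) ^ 2 ≤ 2 - 1 / ∑ τ ∈ Icc 1 T, a τ by
    have := one_le_sum_Icc ha ha1 hT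
    have : 0 ≤ 1 / ∑ τ ∈ Icc 1 T, a τ := by positivity
    linarith
  induction T, hT using Nat.le_induction with
  | base =>
    simp only [Icc_self, sum_singleton]
    rw [sq, ← div_div, div_self (by linarith : a 1 ≠ 0)]
    linarith [div_le_one_of_le₀ ha1 (by linarith : (0 : ℝ) ≤ a 1)]
  | succ T hT ih =>
    rw [sum_Icc_succ_top (by omega), sum_Icc_succ_top (by omega)]
    have hS := one_le_sum_Icc ha ha1 hT
    set S := ∑ τ ∈ Icc 1 T, a τ
    have hS' : 0 < S + a (T + 1) := by linarith [ha (T + 1)]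
    have hstep : a (T + 1) / (S + a (T + 1)) ^ 2 ≤ 1 / S - 1 / (S + a (T + 1)) := by
      rw [div_sub_div _ _ (by linarith) hS'.ne', div_le_div_iff₀ (by positivity)
        (mul_pos (by linarith) hS')]
      nlinarith [ha (T + 1), mul_nonneg (ha (T + 1)) (ha (T + 1))]
    linarith

/-- The `b`-terms telescope through the potential `γ (S_t - n_t) b_t = γ S_{t-1} b_t`. -/
lemma sum_add_mul_sum_le_of_step_bounds {n r δ b : ℕ → ℝ} {T : ℕ} (hT : 1 ≤ T)
    (hn : ∀ t, 0 ≤ n t) (hn1 : 1 ≤ n 1) {γ c₁ c₂ c₃ K : ℝ} (hγ : 0 ≤ γ) (hc₁ : 0 ≤ c₁)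
    (hc₂ : 0 ≤ c₂) (hc₃ : 0 ≤ c₃) (hK : 0 ≤ K)
    (hr : ∀ t ∈ Icc 1 T, r t ≤ n t * c₁ / ∑ τ ∈ Icc 1 t, n τ
      + (γ * (∑ τ ∈ Icc 1 t, n τ - n t) * b t - γ * (∑ τ ∈ Icc 1 t, n τ) * b (t + 1)))
    (hδ : ∀ t ∈ Icc 1 T,
      δ t ≤ n t * (c₂ / ∑ τ ∈ Icc 1 t, n τ + c₃ / (∑ τ ∈ Icc 1 t, n τ) ^ 2))
    (hb : 0 ≤ b (T + 1)) :
    ∑ t ∈ Icc 1 T, r t + K * ∑ t ∈ Icc 1 T, δ t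
      ≤ (c₁ + K * c₂) * (1 + Real.log (∑ τ ∈ Icc 1 T, n τ)) + 2 * K * c₃ := by
  set φ : ℕ → ℝ := fun t => γ * (∑ τ ∈ Icc 1 t, n τ - n t) * b t
  have hφ : ∀ t, φ (t + 1) = γ * (∑ τ ∈ Icc 1 t, n τ) * b (t + 1) := fun t => by
    simp only [φ, sum_Icc_succ_top (by omega : 1 ≤ t + 1), add_sub_cancel_right]
  have hφ1 : φ 1 = 0 := by simp [φ]
  have hr' : ∑ t ∈ Icc 1 T, r t
      ≤ c₁ * ∑ t ∈ Icc 1 T, n t / ∑ τ ∈ Icc 1 t, n τ + (φ 1 - φ (T + 1)) :=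
    calc ∑ t ∈ Icc 1 T, r t
        ≤ ∑ t ∈ Icc 1 T, (n t * c₁ / ∑ τ ∈ Icc 1 t, n τ + (φ t - φ (t + 1))) :=
          sum_le_sum fun t ht => (hφ t).symm ▸ hr t ht
      _ = c₁ * ∑ t ∈ Icc 1 T, n t / ∑ τ ∈ Icc 1 t, n τ + (φ 1 - φ (T + 1)) := by
        rw [sum_add_distrib, mul_sum, ← neg_sub (φ (T + 1)), ← sum_Icc_sub hT φ,
          ← sum_neg_distrib]
        congr 1
        · exact sum_congr rfl fun t _ => by ring
        · exact sum_congr rfl fun t _ => by ring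
  have hδ' : ∑ t ∈ Icc 1 T, δ t ≤ c₂ * ∑ t ∈ Icc 1 T, n t / ∑ τ ∈ Icc 1 t, n τ
      + c₃ * ∑ t ∈ Icc 1 T, n t / (∑ τ ∈ Icc 1 t, n τ) ^ 2 :=
    (sum_le_sum hδ).trans_eq <| by
      rw [mul_sum, mul_sum, ← sum_add_distrib]
      exact sum_congr rfl fun t _ => by ring
  have hφT : 0 ≤ φ (T + 1) := by
    rw [hφ]
    exact mul_nonneg (mul_nonneg hγ (sum_nonneg fun τ _ => hn τ)) hb
  have h₁ := sum_div_sum_Icc_le_one_add_log hn hn1 hT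
  have h₂ := sum_div_sum_Icc_sq_le_two hn hn1 hT
  have := mul_le_mul_of_nonneg_left h₁ hc₁
  have := mul_le_mul_of_nonneg_left h₁ (mul_nonneg hK hc₂)
  have := mul_le_mul_of_nonneg_left h₂ (mul_nonneg hK hc₃)
  nlinarith

end PartialSums

section MirrorStep

variable {E : Type*} [NormedAddCommGroup E] [NormedSpace ℝ E]

lemma sub_le_mul_norm_of_le_sub_sub_apply {G c r s : ℝ} {a b : E} {L : E →L[ℝ] ℝ}
    (h : c ≤ s - r - L (b - a)) (hc : 0 ≤ c) (hL : ‖L‖ ≤ G) : r - s ≤ G * ‖a - b‖ := by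
  have := ((neg_le_abs _).trans_eq (Real.norm_eq_abs _).symm).trans (L.le_opNorm (b - a))
  rw [norm_sub_rev b a] at this
  nlinarith [norm_nonneg (a - b)]

lemma sum_sub_le_apply_sub_of_relStrongConvex {ι : Type*} {K : Finset ι} {f : ι → E → ℝ}
    {ψ : E → ℝ} {γ : ℝ} {x u : E}
    (hrel : ∀ k ∈ K, γ * bregman ψ u x ≤ f k u - f k x - fderiv ℝ (f k) x (u - x)) :
    ∑ k ∈ K, (f k x - f k u)
      ≤ (∑ k ∈ K, fderiv ℝ (f k) x) (x - u) - γ * #K * bregman ψ u x :=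
  calc ∑ k ∈ K, (f k x - f k u)
      ≤ ∑ k ∈ K, (fderiv ℝ (f k) x (x - u) - γ * bregman ψ u x) := by
        refine sum_le_sum fun k hk => ?_
        have := hrel k hk
        rw [← neg_sub x u, map_neg] at this
        linarith
    _ = (∑ k ∈ K, fderiv ℝ (f k) x) (x - u) - γ * #K * bregman ψ u x := by
        simp only [sum_sub_distrib, _root_.sum_apply, sum_const, nsmul_eq_mul]
        ring

lemma delayedMirrorStep_bound {ι : Type*} {X : Set E} {ψ : E → ℝ} {σ γ G L R D S η : ℝ}
    (hX : Convex ℝ X) (hψ : Differentiable ℝ ψ)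
    (hsc : ∀ a ∈ X, ∀ b ∈ X, σ / 2 * ‖a - b‖ ^ 2 ≤ bregman ψ a b)
    (hL : ∀ a ∈ X, ∀ b ∈ X, ‖fderiv ℝ ψ a - fderiv ℝ ψ b‖ ≤ L * ‖a - b‖)
    (hR : ∀ z ∈ X, ‖z‖ ≤ R) (hσ : 0 < σ) (hγ : 0 < γ) (hL0 : 0 ≤ L)
    {K : Finset ι} {f : ι → E → ℝ} {x y x' u : E}
    (hrel : ∀ k ∈ K, γ * bregman ψ u x ≤ f k u - f k x - fderiv ℝ (f k) x (u - x))
    (hG : ∀ k ∈ K, ‖fderiv ℝ (f k) x‖ ≤ G) (hK : K.Nonempty) (hKD : (#K : ℝ) ≤ D)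
    (hKS : (#K : ℝ) ≤ S) (hη : η = 1 / (γ * S))
    (hx : x ∈ X) (hy : y ∈ X) (hx' : x' ∈ X) (hu : u ∈ X)
    (hmin : IsMinOn (proxObjective ψ (∑ k ∈ K, fderiv ℝ (f k) x) η x) X y)
    (happrox : proxObjective ψ (∑ k ∈ K, fderiv ℝ (f k) x) η x x'
      ≤ proxObjective ψ (∑ k ∈ K, fderiv ℝ (f k) x) η x y + η ^ 3 / (2 * σ)) :
    ∑ k ∈ K, (f k x - f k u)
        ≤ #K * ((D * G ^ 2 / 2 + 2 * R * L) / (σ * γ)) / S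
          + (γ * (S - #K) * bregman ψ u x - γ * S * bregman ψ u x')
      ∧ ‖x' - x‖ ≤ #K * (G / (σ * γ) / S + 1 / (σ * γ ^ 2) / S ^ 2) := by
  set g := ∑ k ∈ K, fderiv ℝ (f k) x
  set n : ℝ := (#K : ℝ)
  have hn : 1 ≤ n := Nat.one_le_cast.mpr hK.card_pos
  have hS : 0 < S := by linarith
  have hη0 : 0 < η := by rw [hη]; positivity
  have hR0 : 0 ≤ R := (norm_nonneg x).trans (hR x hx)
  have hg : ‖g‖ ≤ n * G := by simpa [n] using norm_sum_le_of_le K hG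
  have hmove := norm_sub_le_of_proxObjective_le_of_isMinOn hX hψ hsc hσ hη0 hx hy hmin hx' happrox
  have hlin :=
    apply_sub_le_of_proxObjective_le hX hψ hsc hL hL0 hR hσ hη0 hx hy hmin hx' happrox hu
  subst hη
  constructor
  · have hgrad : 1 / (γ * S) * ‖g‖ ^ 2 / (2 * σ) ≤ n * (D * G ^ 2 / 2 / (σ * γ)) / S :=
      calc 1 / (γ * S) * ‖g‖ ^ 2 / (2 * σ) ≤ 1 / (γ * S) * (n * (D * G ^ 2)) / (2 * σ) := by
            gcongr
            nlinarith [mul_nonneg (mul_nonneg (by linarith : (0 : ℝ) ≤ n) (sub_nonneg.2 hKD))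
              (sq_nonneg G), norm_nonneg g]
        _ = n * (D * G ^ 2 / 2 / (σ * γ)) / S := by ring
    have hinexact : 2 * R * L * (1 / (γ * S)) / σ ≤ n * (2 * R * L / (σ * γ)) / S :=
      calc 2 * R * L * (1 / (γ * S)) / σ = 2 * R * L / (σ * γ) / S := by field_simp
        _ ≤ n * (2 * R * L / (σ * γ) / S) := le_mul_of_one_le_left (by positivity) hn
        _ = n * (2 * R * L / (σ * γ)) / S := by ring
    have hbreg : (bregman ψ u x - bregman ψ u x') / (1 / (γ * S))
        = γ * S * (bregman ψ u x - bregman ψ u x') := by field_simp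
    have hsplit : n * ((D * G ^ 2 / 2 + 2 * R * L) / (σ * γ)) / S
        = n * (D * G ^ 2 / 2 / (σ * γ)) / S + n * (2 * R * L / (σ * γ)) / S := by ring
    rw [hsplit]
    linarith [sum_sub_le_apply_sub_of_relStrongConvex hrel]
  · calc ‖x' - x‖ ≤ 1 / (γ * S) * (n * G) / σ + (1 / (γ * S)) ^ 2 / σ :=
          hmove.trans (by gcongr)
      _ = n * (G / (σ * γ) / S) + 1 / (σ * γ ^ 2) / S ^ 2 := by ring
      _ ≤ n * (G / (σ * γ) / S + 1 / (σ * γ ^ 2) / S ^ 2) := by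
        rw [mul_add]
        gcongr
        exact le_mul_of_one_le_left (by positivity) hn

lemma delayedMirrorStep_bound_of_update {ι : Type*} {X : Set E} {ψ : E → ℝ}
    {σ γ G L R D S η : ℝ} (hX : Convex ℝ X) (hψ : Differentiable ℝ ψ)
    (hsc : ∀ a ∈ X, ∀ b ∈ X, σ / 2 * ‖a - b‖ ^ 2 ≤ bregman ψ a b)
    (hL : ∀ a ∈ X, ∀ b ∈ X, ‖fderiv ℝ ψ a - fderiv ℝ ψ b‖ ≤ L * ‖a - b‖)
    (hR : ∀ z ∈ X, ‖z‖ ≤ R) (hσ : 0 < σ) (hγ : 0 < γ) (hL0 : 0 ≤ L)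
    {K : Finset ι} {f : ι → E → ℝ} {x x' u : E}
    (hrel : ∀ k ∈ K, γ * bregman ψ u x ≤ f k u - f k x - fderiv ℝ (f k) x (u - x))
    (hG : ∀ k ∈ K, ‖fderiv ℝ (f k) x‖ ≤ G) (hKD : (#K : ℝ) ≤ D) (hKS : (#K : ℝ) ≤ S)
    (hη : η = 1 / (γ * S)) (hx : x ∈ X) (hu : u ∈ X) {Φ : E → ℝ}
    (hΦ : ∀ z, Φ z = (∑ k ∈ K, fderiv ℝ (f k) x z) + bregman ψ z x / η)
    (hupd : K.Nonempty →
      x' ∈ X ∧ ∃ y ∈ X, IsMinOn Φ X y ∧ Φ x' ≤ Φ y + η ^ 3 / (2 * σ))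
    (hupd0 : K = ∅ → x' = x) :
    ∑ k ∈ K, (f k x - f k u)
        ≤ #K * ((D * G ^ 2 / 2 + 2 * R * L) / (σ * γ)) / S
          + (γ * (S - #K) * bregman ψ u x - γ * S * bregman ψ u x')
      ∧ ‖x' - x‖ ≤ #K * (G / (σ * γ) / S + 1 / (σ * γ ^ 2) / S ^ 2) := by
  rcases K.eq_empty_or_nonempty with hK | hK
  · simp [hK, hupd0 hK]
  obtain ⟨hx', y, hy, hmin, happrox⟩ := hupd hK
  obtain rfl : Φ = proxObjective ψ (∑ k ∈ K, fderiv ℝ (f k) x) η x :=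
    funext fun z => by simp [hΦ, proxObjective, _root_.sum_apply]
  exact delayedMirrorStep_bound hX hψ hsc hL hR hσ hγ hL0 hrel hG hK hKD hKS hη hx hy hx' hu
    hmin happrox

end MirrorStep

lemma forall_mem_Icc_of_succ {p : ℕ → Prop} {T : ℕ} (h1 : p 1)
    (hsucc : ∀ t ∈ Icc 1 T, p t → p (t + 1)) : ∀ t ∈ Icc 1 (T + 1), p t := by
  intro t ht
  obtain ⟨ht1, htT⟩ := mem_Icc.1 ht
  clear ht
  induction t, ht1 using Nat.le_induction with
  | base => exact h1
  | succ t ht1 ih => exact hsucc t (mem_Icc.2 ⟨ht1, by omega⟩) (ih (by omega))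

theorem dmd_rsc_regret_general
    {E : Type*} [NormedAddCommGroup E] [NormedSpace ℝ E]
    (X : Set E) (hX : Convex ℝ X)
    (R : ℝ) (hR : ∀ z ∈ X, ‖z‖ ≤ R)
    (T : ℕ) (hT : 1 ≤ T) (d : ℕ → ℕ)
    (hd : ∀ t ∈ Finset.Icc 1 T, 1 ≤ d t ∧ t + d t - 1 ≤ T)
    (F : ℕ → Finset ℕ)
    (hF : ∀ t, F t = (Finset.Icc 1 T).filter (fun k => k + d k - 1 = t))
    (f : ℕ → E → ℝ) (Gstar : ℝ)
    (hG : ∀ t ∈ Finset.Icc 1 T, ∀ z ∈ X, ‖fderiv ℝ (f t) z‖ ≤ Gstar)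
    (ψ : E → ℝ) (σ γ ξ : ℝ) (hσ : 0 < σ) (hγ : 0 < γ) (hξ : 0 < ξ)
    (hψdiff : Differentiable ℝ ψ)
    (B : E → E → ℝ)
    (hB : ∀ a b, B a b = ψ a - ψ b - fderiv ℝ ψ b (a - b))
    (hψsc : ∀ a ∈ X, ∀ b ∈ X, B a b ≥ σ / 2 * ‖a - b‖ ^ 2)
    (hψlip : ∀ a ∈ X, ∀ b ∈ X,
      ‖fderiv ℝ ψ a - fderiv ℝ ψ b‖ ≤ ξ * Gstar * ‖a - b‖)
    (hrel : ∀ t ∈ Finset.Icc 1 T, ∀ a ∈ X, ∀ b ∈ X,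
      f t a - f t b - fderiv ℝ (f t) b (a - b) ≥ γ * B a b)
    (x : ℕ → E) (hx1 : x 1 ∈ X)
    (hF1 : (F 1).Nonempty)
    (ην : ℕ → ℝ)
    (hην : ∀ t ∈ Finset.Icc 1 T,
      ην t = 1 / (γ * ∑ τ ∈ Finset.Icc 1 t, ((F τ).card : ℝ)))
    (Bt : ℕ → E → ℝ)
    (hBt : ∀ t z, Bt t z =
      (∑ k ∈ F t, fderiv ℝ (f k) (x t) z) + B z (x t) / ην t)
    (hupd : ∀ t ∈ Finset.Icc 1 T, (F t).Nonempty →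
      x (t + 1) ∈ X ∧ ∃ ystar ∈ X, IsMinOn (Bt t) X ystar ∧
        Bt t (x (t + 1)) ≤ Bt t ystar + (ην t) ^ 3 / (2 * σ))
    (hupd0 : ∀ t ∈ Finset.Icc 1 T, F t = ∅ → x (t + 1) = x t)
    :
    ∀ xstar ∈ X,
      ∑ t ∈ Finset.Icc 1 T, f t (x t) - ∑ t ∈ Finset.Icc 1 T, f t xstar
        ≤ (3 * (((Finset.Icc 1 T).sup d : ℕ) : ℝ) * Gstar ^ 2 + 8 * ξ * R * Gstar)
              * (1 + Real.log T) / (2 * σ * γ)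
          + 6 * (((Finset.Icc 1 T).sup d : ℕ) : ℝ) * Gstar / (σ * γ ^ 2)
          + 2 * (((Finset.Icc 1 T).sup d : ℕ) : ℝ) * ξ * Gstar ^ 2 / (σ ^ 2 * γ ^ 2) := by
  intro u hu
  obtain rfl : B = bregman ψ := funext₂ hB
  obtain rfl : F = feedbackSet T d := funext hF
  set D := (Icc 1 T).sup d
  set n : ℕ → ℝ := fun t => (#(feedbackSet T d t) : ℝ)
  have hG0 : 0 ≤ Gstar := (norm_nonneg _).trans (hG 1 (mem_Icc.2 ⟨le_rfl, hT⟩) (x 1) hx1)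
  have hR0 : 0 ≤ R := (norm_nonneg _).trans (hR _ hx1)
  have hxX : ∀ t ∈ Icc 1 (T + 1), x t ∈ X := forall_mem_Icc_of_succ hx1 fun t ht hxt => by
    rcases (feedbackSet T d t).eq_empty_or_nonempty with h | h
    · rwa [hupd0 t ht h]
    · exact (hupd t ht h).1
  have hxX' : ∀ t ∈ Icc 1 T, x t ∈ X := fun t ht => hxX t (by grind)
  have hstep := fun t ht => delayedMirrorStep_bound_of_update (D := D) hX hψdiff hψsc hψlip hR hσ hγ
    (by positivity) (fun k hk => hrel k (mem_filter.1 hk).1 u hu (x t) (hxX' t ht))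
    (fun k hk => hG k (mem_filter.1 hk).1 _ (hxX' t ht))
    (by exact_mod_cast card_feedbackSet_le hd t)
    (single_le_sum (f := n) (fun τ _ => Nat.cast_nonneg _) (mem_Icc.2 ⟨(mem_Icc.1 ht).1, le_rfl⟩))
    (hην t ht) (hxX' t ht) hu (hBt t) (hupd t ht) (hupd0 t ht)
  have hlip : ∀ t ∈ Icc 1 T, ∀ k ∈ feedbackSet T d t,
      f k (x k) - f k (x t) ≤ Gstar * ‖x k - x t‖ := fun t ht k hk =>
    have hk := (mem_filter.1 hk).1
    sub_le_mul_norm_of_le_sub_sub_apply (hrel k hk _ (hxX' t ht) _ (hxX' k hk))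
      (mul_nonneg hγ.le (bregman_nonneg hσ.le hψsc (hxX' t ht) (hxX' k hk))) (hG k hk _ (hxX' k hk))
  have hST : ∑ τ ∈ Icc 1 T, n τ = T := by
    simpa [n] using congrArg ((↑) : ℕ → ℝ) (sum_card_feedbackSet hd)
  calc _ ≤ _ := sum_sub_le_sum_sum_feedbackSet_add hd hG0 hlip
    _ ≤ ((D * Gstar ^ 2 / 2 + 2 * R * (ξ * Gstar)) / (σ * γ) + Gstar * D * (Gstar / (σ * γ)))
          * (1 + Real.log (∑ τ ∈ Icc 1 T, n τ)) + 2 * (Gstar * D) * (1 / (σ * γ ^ 2)) :=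
        sum_add_mul_sum_le_of_step_bounds (n := n) (K := Gstar * D) hT (fun t => Nat.cast_nonneg _)
          (Nat.one_le_cast.mpr hF1.card_pos) hγ.le (by positivity) (by positivity)
          (by positivity) (by positivity) (fun t ht => (hstep t ht).1) (fun t ht => (hstep t ht).2)
          (bregman_nonneg hσ.le hψsc hu (hxX (T + 1) (mem_Icc.2 ⟨by omega, le_rfl⟩)))
    _ ≤ _ := by
      rw [hST, ← sub_nonneg]
      convert (by positivity : 0 ≤ 2 * ξ * R * Gstar * (1 + Real.log T) / (σ * γ)
        + 4 * D * Gstar / (σ * γ ^ 2) + 2 * D * ξ * Gstar ^ 2 / (σ ^ 2 * γ ^ 2)) using 1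
      field_simp
      ring

/-- Theorem 4: DMD-RSC regret bound. -/
theorem dmd_rsc_regret
    {E : Type*} [NormedAddCommGroup E] [NormedSpace ℝ E]
    (X : Set E) (hXne : X.Nonempty) (hX : Convex ℝ X)
    (R : ℝ) (hR : ∀ z ∈ X, ‖z‖ ≤ R)
    (T : ℕ) (hT : 1 ≤ T) (d : ℕ → ℕ)
    (hd : ∀ t ∈ Finset.Icc 1 T, 1 ≤ d t ∧ t + d t - 1 ≤ T)
    (F : ℕ → Finset ℕ)
    (hF : ∀ t, F t = (Finset.Icc 1 T).filter (fun k => k + d k - 1 = t))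
    (f : ℕ → E → ℝ) (Gstar : ℝ)
    (hfdiff : ∀ t ∈ Finset.Icc 1 T, Differentiable ℝ (f t))
    (hG : ∀ t ∈ Finset.Icc 1 T, ∀ z ∈ X, ‖fderiv ℝ (f t) z‖ ≤ Gstar)
    (ψ : E → ℝ) (σ γ ξ : ℝ) (hσ : 0 < σ) (hγ : 0 < γ) (hξ : 0 < ξ)
    (hψdiff : Differentiable ℝ ψ)
    (B : E → E → ℝ)
    (hB : ∀ a b, B a b = ψ a - ψ b - fderiv ℝ ψ b (a - b))
    (hψsc : ∀ a ∈ X, ∀ b ∈ X, B a b ≥ σ / 2 * ‖a - b‖ ^ 2)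
    (hψlip : ∀ a ∈ X, ∀ b ∈ X,
      ‖fderiv ℝ ψ a - fderiv ℝ ψ b‖ ≤ ξ * Gstar * ‖a - b‖)
    (hrel : ∀ t ∈ Finset.Icc 1 T, ∀ a ∈ X, ∀ b ∈ X,
      f t a - f t b - fderiv ℝ (f t) b (a - b) ≥ γ * B a b)
    (x : ℕ → E) (hx1 : x 1 ∈ X)
    (hF1 : (F 1).Nonempty)
    (ην : ℕ → ℝ)
    (hην : ∀ t ∈ Finset.Icc 1 T,
      ην t = 1 / (γ * ∑ τ ∈ Finset.Icc 1 t, ((F τ).card : ℝ)))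
    (Bt : ℕ → E → ℝ)
    (hBt : ∀ t z, Bt t z =
      (∑ k ∈ F t, fderiv ℝ (f k) (x t) z) + B z (x t) / ην t)
    (hupd : ∀ t ∈ Finset.Icc 1 T, (F t).Nonempty →
      x (t + 1) ∈ X ∧ ∃ ystar ∈ X, IsMinOn (Bt t) X ystar ∧
        Bt t (x (t + 1)) ≤ Bt t ystar + (ην t) ^ 3 / (2 * σ))
    (hupd0 : ∀ t ∈ Finset.Icc 1 T, F t = ∅ → x (t + 1) = x t)
    :
    ∀ xstar ∈ X,
      ∑ t ∈ Finset.Icc 1 T, f t (x t) - ∑ t ∈ Finset.Icc 1 T, f t xstar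
        ≤ (3 * (((Finset.Icc 1 T).sup d : ℕ) : ℝ) * Gstar ^ 2 + 8 * ξ * R * Gstar)
              * (1 + Real.log T) / (2 * σ * γ)
          + 6 * (((Finset.Icc 1 T).sup d : ℕ) : ℝ) * Gstar / (σ * γ ^ 2)
          + 2 * (((Finset.Icc 1 T).sup d : ℕ) : ℝ) * ξ * Gstar ^ 2 / (σ ^ 2 * γ ^ 2) :=
  dmd_rsc_regret_general X hX R hR T hT d hd F hF f Gstar hG ψ σ γ ξ hσ hγ hξ hψdiff B hB hψsc hψlip
    hrel x hx1 hF1 ην hην Bt hBt hupd hupd0
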